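/- Let V be a closed subspace of a Hilbert space H and S an isometry of H with SV ⊆ V, such that S|V is a pure shift, i.e. ⋂_{k∈ℕ} SᵏV = {0}. Then V decomposes as the orthogonal direct sum V = ⊕_{k≥0} Sᵏ(V ⊖ SV), where V ⊖ SV = V ∩ (SV)^⊥ (Wold–Kolmogorov decomposition). -/

import Mathlib

/-!
Write `W = V ⊓ (S V)ᗮ`. Since `S V` is closed, `V = S V ⊕ W`, and applying the isometry `Sᵏ`
gives `Sᵏ V = Sᵏ⁺¹ V ⊕ Sᵏ W`. Hence the spaces `Sᵏ W` are mutually orthogonal (`Sᵏ W ⊆ S V ⟂ W`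
for `k ≥ 1`), and a vector of `V` orthogonal to all of them lies in every `Sᵏ V`, so it vanishes
by purity.
-/

namespace Submodule

variable {R M : Type*} [Semiring R] [AddCommMonoid M] [Module R M]

theorem map_pow_succ (f : M →ₗ[R] M) (p : Submodule R M) (n : ℕ) :
    p.map (f ^ (n + 1)) = (p.map f).map (f ^ n) := by
  rw [pow_succ, Module.End.mul_eq_comp, map_comp]

theorem map_pow_le_of_map_le {f : M →ₗ[R] M} {p : Submodule R M} (h : p.map f ≤ p) (n : ℕ) :
    p.map (f ^ n) ≤ p :=
  map_le_iff_le_comap.2 <| p.le_comap_pow_of_le_comap (map_le_iff_le_comap.1 h) n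

variable {𝕜 E : Type*} [RCLike 𝕜] [NormedAddCommGroup E] [InnerProductSpace 𝕜 E]

theorem IsOrtho.sup_inf_orthogonal {U V : Submodule 𝕜 E} (h : U ⟂ V) : (U ⊔ V) ⊓ Vᗮ = U := by
  rw [sup_inf_assoc_of_le V h.le, inf_orthogonal_eq_bot, sup_bot_eq]

end Submodule

theorem LinearIsometry.toLinearMap_pow {R E : Type*} [Semiring R] [SeminormedAddCommGroup E]
    [Module R E] (S : E →ₗᵢ[R] E) (n : ℕ) : (S ^ n).toLinearMap = S.toLinearMap ^ n := by
  ext x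
  simp [LinearIsometry.coe_pow, Module.End.pow_apply]

namespace LinearIsometry

open Submodule

variable {𝕜 E : Type*} [RCLike 𝕜] [NormedAddCommGroup E] [InnerProductSpace 𝕜 E]
  (S : E →ₗᵢ[𝕜] E) (V : Submodule 𝕜 E)

/-- `V ⊖ S V`. -/
def wanderingSubspace : Submodule 𝕜 E := V ⊓ (V.map S.toLinearMap)ᗮ

variable {S V}

theorem isOrtho_map_pow_wanderingSubspace (hSV : V.map S.toLinearMap ≤ V) {j k : ℕ} (hjk : j < k) :
    (S.wanderingSubspace V).map (S.toLinearMap ^ j) ⟂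
      (S.wanderingSubspace V).map (S.toLinearMap ^ k) := by
  obtain ⟨m, rfl⟩ : ∃ m, k = j + (m + 1) := ⟨k - j - 1, by omega⟩
  have hW : S.wanderingSubspace V ⟂ V.map S.toLinearMap := isOrtho_iff_le.2 inf_le_right
  have hWk : (S.wanderingSubspace V).map (S.toLinearMap ^ (m + 1)) ≤ V.map S.toLinearMap := by
    rw [pow_succ', Module.End.mul_eq_comp, map_comp]
    exact map_mono (map_pow_le_of_map_le hSV m |>.trans' (map_mono inf_le_left))
  rw [pow_add, Module.End.mul_eq_comp, map_comp, ← toLinearMap_pow]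
  exact (hW.map (S ^ j)).mono_right (map_mono hWk)

theorem pairwise_isOrtho_map_pow_wanderingSubspace (hSV : V.map S.toLinearMap ≤ V) :
    Pairwise fun j k ↦ (S.wanderingSubspace V).map (S.toLinearMap ^ j) ⟂
      (S.wanderingSubspace V).map (S.toLinearMap ^ k) := by
  intro j k hjk
  rcases hjk.lt_or_gt with h | h
  · exact isOrtho_map_pow_wanderingSubspace hSV h
  · exact (isOrtho_map_pow_wanderingSubspace hSV h).symm

theorem map_sup_wanderingSubspace [CompleteSpace V] (hSV : V.map S.toLinearMap ≤ V) :
    V.map S.toLinearMap ⊔ S.wanderingSubspace V = V := by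
  have : CompleteSpace (V.map S.toLinearMap) := S.completeSpace_map V
  rw [wanderingSubspace, inf_comm]
  exact sup_orthogonal_inf_of_hasOrthogonalProjection hSV

theorem map_pow_inf_orthogonal_le [CompleteSpace V] (hSV : V.map S.toLinearMap ≤ V) (k : ℕ) :
    V.map (S.toLinearMap ^ k) ⊓ ((S.wanderingSubspace V).map (S.toLinearMap ^ k))ᗮ ≤
      V.map (S.toLinearMap ^ (k + 1)) := by
  have hortho : (V.map S.toLinearMap).map (S.toLinearMap ^ k) ⟂
      (S.wanderingSubspace V).map (S.toLinearMap ^ k) := by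
    rw [← toLinearMap_pow]
    exact (isOrtho_iff_le.2 inf_le_right).symm.map (S ^ k)
  have hsplit : V.map (S.toLinearMap ^ k) = (V.map S.toLinearMap).map (S.toLinearMap ^ k) ⊔
      (S.wanderingSubspace V).map (S.toLinearMap ^ k) := by
    rw [← Submodule.map_sup, map_sup_wanderingSubspace hSV]
  rw [hsplit, hortho.sup_inf_orthogonal, map_pow_succ]

theorem inf_orthogonal_iSup_map_pow_wanderingSubspace_le [CompleteSpace V]
    (hSV : V.map S.toLinearMap ≤ V) (n : ℕ) :
    V ⊓ (⨆ k : ℕ, (S.wanderingSubspace V).map (S.toLinearMap ^ k))ᗮ ≤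
      V.map (S.toLinearMap ^ n) := by
  induction n with
  | zero =>
    rw [pow_zero, Module.End.one_eq_id, map_id]
    exact inf_le_left
  | succ n ih =>
    refine le_trans (le_inf ih ?_) (map_pow_inf_orthogonal_le hSV n)
    exact inf_le_right.trans <| orthogonal_le <|
      le_iSup (fun k ↦ (S.wanderingSubspace V).map (S.toLinearMap ^ k)) n

theorem topologicalClosure_iSup_map_pow_wanderingSubspace [CompleteSpace E]
    (hV : IsClosed (V : Set E)) (hSV : V.map S.toLinearMap ≤ V)
    (hpure : ⨅ k : ℕ, V.map (S.toLinearMap ^ k) = ⊥) :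
    (⨆ k : ℕ, (S.wanderingSubspace V).map (S.toLinearMap ^ k)).topologicalClosure = V := by
  have : CompleteSpace V := hV.completeSpace_coe
  set K := (⨆ k : ℕ, (S.wanderingSubspace V).map (S.toLinearMap ^ k)).topologicalClosure
  have hKV : K ≤ V := topologicalClosure_minimal _
    (iSup_le fun k ↦ (map_pow_le_of_map_le hSV k).trans' (map_mono inf_le_left)) hV
  have hVK : Kᗮ ⊓ V = ⊥ := by
    rw [inf_comm, eq_bot_iff, ← hpure]
    exact le_iInf fun n ↦ (inf_le_inf_left V (orthogonal_le (le_topologicalClosure _))).trans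
      (inf_orthogonal_iSup_map_pow_wanderingSubspace_le hSV n)
  rw [← sup_orthogonal_inf_of_hasOrthogonalProjection hKV, hVK, sup_bot_eq]

end LinearIsometry

open LinearIsometry in
theorem stmt_5 (H : Type*) [NormedAddCommGroup H] [InnerProductSpace ℂ H] [CompleteSpace H]
    (S : H →ₗᵢ[ℂ] H) (V : Submodule ℂ H) (hV : IsClosed (V : Set H))
    (hSV : Submodule.map S.toLinearMap V ≤ V)
    (hpure : (⨅ k : ℕ, Submodule.map (S.toLinearMap ^ k) V) = ⊥) :
    (∀ j k : ℕ, j ≠ k →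
      ∀ x ∈ Submodule.map (S.toLinearMap ^ j) (V ⊓ (Submodule.map S.toLinearMap V)ᗮ),
      ∀ y ∈ Submodule.map (S.toLinearMap ^ k) (V ⊓ (Submodule.map S.toLinearMap V)ᗮ),
        (inner ℂ x y : ℂ) = 0) ∧
    V = (⨆ k : ℕ, Submodule.map (S.toLinearMap ^ k)
          (V ⊓ (Submodule.map S.toLinearMap V)ᗮ)).topologicalClosure :=
  ⟨fun _ _ hjk _ hx _ hy ↦ (pairwise_isOrtho_map_pow_wanderingSubspace hSV hjk).inner_eq hx hy,
    (topologicalClosure_iSup_map_pow_wanderingSubspace hV hSV hpure).symm⟩
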